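/- arXiv:1410.0560 — 4 statements merged into one kernel-verified Lean document; each statement's English description precedes it below -/
import Mathlib

section
/- If F is a P-filter on ω of countable type containing the Fréchet filter, then F is diagonalizable: in fact, if F is ω-diagonalized by a countable family {A_n : n ∈ ω} of infinite sets, and F is a P-filter, then some A_n diagonalizes F, i.e., A_n ⊆* M for every M ∈ F. -/
/-- If a P-filter on ω is ω-diagonalized by a countable family of infinite sets,
then some member of the family diagonalizes it. -/
theorem stmt_4 (F : Filter ℕ)
    (hP : ∀ B : ℕ → Set ℕ, (∀ n, B n ∈ F) → ∃ C ∈ F, ∀ n, (C \ B n).Finite)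
    (A : ℕ → Set ℕ) (hAinf : ∀ n, (A n).Infinite)
    (hdiag : ∀ M ∈ F, ∃ n, A n ⊆ M) :
    ∃ n, ∀ M ∈ F, (A n \ M).Finite := by
  by_contra h
  push_neg at h
  choose M hMF hMinf using h
  obtain ⟨C, hCF, hC⟩ := hP M hMF
  obtain ⟨n, hn⟩ := hdiag C hCF
  exact hMinf n ((hC n).subset (Set.diff_subset_diff_left hn))
end

section
/- If filters F_1, F_2, … on ω are each either ω-diagonalizable or of the form F_A = {M : A ⊆ M} for some finite set A, then their intersection ⋂_{n∈ω} F_n is also either ω-diagonalizable or of the form F_A for some finite set A. -/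
/-- A filter on ω is ω-diagonalizable if some countable family of infinite sets
is such that every member of the filter contains one of them. -/
def OmegaDiagonalizable (F : Set (Set ℕ)) : Prop :=
  ∃ A : ℕ → Set ℕ, (∀ n, (A n).Infinite) ∧ ∀ M ∈ F, ∃ n, A n ⊆ M

/-- If each filter F_n is either ω-diagonalizable or principal generated by a finite set,
then so is their intersection (as families of sets, the supremum in Mathlib's order). -/
theorem stmt_5 (Fn : ℕ → Filter ℕ)
    (h : ∀ n, OmegaDiagonalizable (Fn n).sets ∨
      ∃ A : Set ℕ, A.Finite ∧ Fn n = Filter.principal A) :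
    OmegaDiagonalizable {M : Set ℕ | ∀ n, M ∈ Fn n} ∨
      ∃ A : Set ℕ, A.Finite ∧ {M : Set ℕ | ∀ n, M ∈ Fn n} = {M : Set ℕ | A ⊆ M} := by
  by_cases hD : ∃ n, OmegaDiagonalizable (Fn n).sets
  · obtain ⟨n0, A, hInf, hA⟩ := hD
    exact Or.inl ⟨A, hInf, fun M hM => hA M (hM n0)⟩
  · push_neg at hD
    have hP : ∀ n, ∃ A : Set ℕ, A.Finite ∧ Fn n = Filter.principal A := by
      intro n; rcases h n with h' | h'
      · exact absurd h' (hD n)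
      · exact h'
    choose B hBfin hBeq using hP
    have key : ∀ M : Set ℕ, (∀ n, M ∈ Fn n) ↔ (⋃ n, B n) ⊆ M := by
      intro M
      constructor
      · intro hM
        refine Set.iUnion_subset fun n => ?_
        have := hM n
        rw [hBeq n, Filter.mem_principal] at this
        exact this
      · intro hM n
        rw [hBeq n, Filter.mem_principal]
        exact (Set.subset_iUnion B n).trans hM
    by_cases hfin : (⋃ n, B n).Finite
    · refine Or.inr ⟨⋃ n, B n, hfin, ?_⟩
      ext M; simpa using key M
    · refine Or.inl ⟨fun _ => ⋃ n, B n, fun _ => hfin,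
        fun M hM => ⟨0, (key M).mp hM⟩⟩
end

section
/- If (F_n)_{n∈ω} is an increasing sequence of filters on ω each of which is either ω-diagonalizable or of the form F_A for some finite set A, then the union ⋃_{n∈ω} F_n is a filter which is either ω-diagonalizable or of the form F_A for some finite set A. -/
/-- The union of an increasing sequence of filters, each ω-diagonalizable or
principal over a finite set, is a filter of one of these two forms. -/
theorem stmt_6 (Fn : ℕ → Filter ℕ)
    (hmono : ∀ n, (Fn n).sets ⊆ (Fn (n + 1)).sets)
    (h : ∀ n, OmegaDiagonalizable (Fn n).sets ∨
      ∃ A : Set ℕ, A.Finite ∧ Fn n = Filter.principal A)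
    (U : Set (Set ℕ)) (hU : U = ⋃ n, (Fn n).sets) :
    (Set.univ ∈ U ∧ (∀ A B, A ∈ U → B ∈ U → A ∩ B ∈ U) ∧
      (∀ A B : Set ℕ, A ∈ U → A ⊆ B → B ∈ U)) ∧
    (OmegaDiagonalizable U ∨ ∃ A : Set ℕ, A.Finite ∧ U = {M : Set ℕ | A ⊆ M}) := by
  subst hU
  -- monotonicity for arbitrary indices
  have hle : ∀ a b : ℕ, a ≤ b → (Fn a).sets ⊆ (Fn b).sets := by
    intro a b hab
    induction hab with
    | refl => exact subset_rfl
    | step hk ih => exact ih.trans (hmono _)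
  constructor
  · refine ⟨Set.mem_iUnion.2 ⟨0, (Fn 0).univ_sets⟩, ?_, ?_⟩
    · intro A B hA hB
      obtain ⟨n, hA⟩ := Set.mem_iUnion.1 hA
      obtain ⟨m, hB⟩ := Set.mem_iUnion.1 hB
      exact Set.mem_iUnion.2 ⟨max n m,
        (Fn (max n m)).inter_sets (hle n _ (le_max_left n m) hA)
          (hle m _ (le_max_right n m) hB)⟩
    · intro A B hA hAB
      obtain ⟨n, hA⟩ := Set.mem_iUnion.1 hA
      exact Set.mem_iUnion.2 ⟨n, (Fn n).sets_of_superset hA hAB⟩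
  · by_cases hcase : ∀ n : ℕ, ∃ m, n ≤ m ∧ OmegaDiagonalizable (Fn m).sets
    · left
      choose m hm hd using hcase
      choose A hAinf hAsub using hd
      refine ⟨fun k => A k.unpair.1 k.unpair.2, fun k => hAinf _ _, ?_⟩
      intro M hM
      obtain ⟨n, hMn⟩ := Set.mem_iUnion.1 hM
      obtain ⟨j, hj⟩ := hAsub n M (hle n (m n) (hm n) hMn)
      exact ⟨Nat.pair n j, by simpa [Nat.unpair_pair] using hj⟩
    · right
      push_neg at hcase
      obtain ⟨N, hN⟩ := hcase
      have hprin : ∀ k : ℕ, ∃ A : Set ℕ, A.Finite ∧ Fn (N + k) = Filter.principal A := by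
        intro k
        rcases h (N + k) with hd | hp
        · exact absurd hd (hN (N + k) (Nat.le_add_right N k))
        · exact hp
      choose g hgfin hgprin using hprin
      -- g is antitone
      have hganti : ∀ a b : ℕ, a ≤ b → g b ⊆ g a := by
        intro a b hab
        have h1 : g a ∈ (Fn (N + a)).sets := by
          rw [hgprin a]; exact Filter.mem_principal_self _
        have h2 : g a ∈ (Fn (N + b)).sets :=
          hle _ _ (Nat.add_le_add_left hab N) h1
        rw [hgprin b] at h2
        exact h2
      -- cardinalities stabilize
      set f : ℕ → ℕ := fun k => (hgfin k).toFinset.card with hf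
      have hrange : (Set.range f).Nonempty := ⟨f 0, 0, rfl⟩
      obtain ⟨k0, hk0⟩ := Nat.sInf_mem hrange
      have hstab : ∀ k, k0 ≤ k → g k = g k0 := by
        intro k hk
        have hsub : (hgfin k).toFinset ⊆ (hgfin k0).toFinset := by
          simpa [Set.Finite.toFinset_subset_toFinset] using hganti k0 k hk
        have hcard : (hgfin k0).toFinset.card ≤ (hgfin k).toFinset.card := by
          have : f k0 ≤ f k := hk0 ▸ Nat.sInf_le ⟨k, rfl⟩
          exact this
        have := Finset.eq_of_subset_of_card_le hsub hcard
        have := congrArg (fun s : Finset ℕ => (s : Set ℕ)) this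
        simpa [Set.Finite.coe_toFinset] using this
      refine ⟨g k0, hgfin k0, ?_⟩
      ext S
      simp only [Set.mem_iUnion, Set.mem_setOf_eq]
      constructor
      · rintro ⟨n, hS⟩
        set m := max n (N + k0) with hm
        have hSm : S ∈ (Fn m).sets := hle n m (le_max_left _ _) hS
        have hNm : N ≤ m := le_trans (Nat.le_add_right N k0) (le_max_right _ _)
        have hmk : m = N + (m - N) := by omega
        rw [hmk, hgprin (m - N)] at hSm
        rw [Filter.mem_sets, Filter.mem_principal] at hSm
        have hk0le : k0 ≤ m - N := by
          have : N + k0 ≤ m := le_max_right _ _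
          omega
        calc g k0 = g (m - N) := (hstab _ hk0le).symm
          _ ⊆ S := hSm
      · intro hS
        refine ⟨N + k0, ?_⟩
        rw [hgprin k0]
        exact Filter.mem_principal.2 hS
end

section
/- Let π₀, π₁ : ω → ω×ω be bijections such that |π₀⁻¹[Z_i] ∩ π₁⁻¹[Z_j]| = ω for all i,j ∈ ω, where Z_i = {i}×ω. Define filters G_k on ω by M ∈ G_k iff π_k[M] ∈ N₂ (k ∈ {0,1}), where N₂ is the filter on ω×ω with M' ∈ N₂ iff for all but finitely many i, the section {n : (i,n) ∈ M'} is cofinite. Then G₀ ∩ G₁ does not contain an isomorphic copy of N₂: there is no bijection σ : ω×ω → ω with σ[A] ∈ G₀ ∩ G₁ for every A ∈ N₂. -/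
/-!
Put `fₖ = πₖ ∘ σ`, `Dᵢ = f₀⁻¹[Zᵢ]` and `Eⱼ = f₁⁻¹[Zⱼ]`. A bijection carrying `N₂` into `N₂` carries
its dual ideal (sets with only finitely many infinite columns) into itself, so a set `B` of the
ideal meets only finitely many `Dᵢ`, and only finitely many `Eⱼ`, in an infinite set. If
infinitely many `Dᵢ` met infinitely many columns, choosing one point of `Dᵢ` in each such column
beyond `i` would give a set with finite columns meeting all of them infinitely. Hence some `Dᵢ`
lies in finitely many columns; their union is in the ideal, yet it contains every `Dᵢ ∩ Eⱼ`,
which is infinite by hypothesis.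
-/

def N2 : Set (Set (ℕ × ℕ)) :=
  {M : Set (ℕ × ℕ) | {i : ℕ | ¬ {n : ℕ | (i, n) ∉ M}.Finite}.Finite}

open Set Function

def N2Ideal : Set (Set (ℕ × ℕ)) :=
  {B : Set (ℕ × ℕ) | {i : ℕ | {n : ℕ | (i, n) ∈ B}.Infinite}.Finite}

lemma compl_mem_N2_iff {B : Set (ℕ × ℕ)} : Bᶜ ∈ N2 ↔ B ∈ N2Ideal := by
  simp [N2, N2Ideal]

lemma infinite_inter_preimage_fst_iff {α β : Type*} {S : Set (α × β)} {a : α} :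
    (S ∩ Prod.fst ⁻¹' {a}).Infinite ↔ {b | (a, b) ∈ S}.Infinite := by
  have hS : S ∩ Prod.fst ⁻¹' {a} = Prod.mk a '' {b | (a, b) ∈ S} := by
    ext ⟨a', b⟩
    constructor
    · rintro ⟨hab, rfl : a' = a⟩
      exact ⟨b, hab, rfl⟩
    · rintro ⟨b, hab, ⟨⟩⟩
      exact ⟨hab, rfl⟩
  rw [hS, infinite_image_iff (Prod.mk_right_injective a).injOn]

lemma finite_setOf_infinite_inter_preimage_fst {f : ℕ × ℕ → ℕ × ℕ} (hf : Bijective f)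
    (hN2 : ∀ A ∈ N2, f '' A ∈ N2) :
    ∀ B ∈ N2Ideal, {i | (B ∩ f ⁻¹' (Prod.fst ⁻¹' {i})).Infinite}.Finite := by
  intro B hB
  have hfB : f '' B ∈ N2Ideal := by
    rw [← compl_mem_N2_iff, ← image_compl_eq hf]
    exact hN2 _ (compl_mem_N2_iff.2 hB)
  refine hfB.subset fun i hi => ?_
  rw [mem_ofPred_eq, ← infinite_inter_preimage_fst_iff, ← image_inter_preimage]
  exact hi.image hf.1.injOn

lemma finite_setOf_infinite_image_fst {D : ℕ → Set (ℕ × ℕ)}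
    (hD : ∀ B ∈ N2Ideal, {i | (B ∩ D i).Infinite}.Finite) :
    {i | (Prod.fst '' D i).Infinite}.Finite := by
  have hpick : ∀ i r, ∃ p : ℕ × ℕ, r ∈ Prod.fst '' D i → p ∈ D i ∧ p.1 = r := by
    intro i r
    by_cases hr : r ∈ Prod.fst '' D i
    · obtain ⟨p, hp, rfl⟩ := hr
      exact ⟨p, fun _ => ⟨hp, rfl⟩⟩
    · exact ⟨0, fun hr' => absurd hr' hr⟩
  choose x hx using hpick
  -- `B` meets column `r` only in the points `x i r` with `i < r`, yet meets every `D i` with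
  -- infinite projection in infinitely many columns.
  set B := ⋃ i, x i '' (Prod.fst '' D i \ Iic i)
  have hB : B ∈ N2Ideal := by
    refine finite_empty.subset fun r hr => hr ?_
    refine ((finite_Iio r).image fun i => (x i r).2).subset ?_
    rintro n ⟨_, ⟨i, rfl⟩, r', ⟨hr', hir'⟩, hxr⟩
    obtain rfl : r' = r := (hx i r' hr').2.symm.trans (congrArg Prod.fst hxr)
    exact ⟨i, mem_Iio.2 (lt_of_not_ge hir'), congrArg Prod.snd hxr⟩
  refine (hD B hB).subset fun i hi => ?_
  have hsub : x i '' (Prod.fst '' D i \ Iic i) ⊆ B ∩ D i := by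
    rintro _ ⟨r, hr, rfl⟩
    exact ⟨mem_iUnion.2 ⟨i, r, hr, rfl⟩, (hx i r hr.1).1⟩
  have hinj : InjOn (x i) (Prod.fst '' D i \ Iic i) := fun r hr r' hr' hrr' => by
    rw [← (hx i r hr.1).2, ← (hx i r' hr'.1).2, hrr']
  exact ((hi.sdiff (finite_Iic i)).image hinj).mono hsub

lemma finite_setOf_infinite_inter_of_finite_image_fst {E : ℕ → Set (ℕ × ℕ)}
    (hE : ∀ B ∈ N2Ideal, {j | (B ∩ E j).Infinite}.Finite) {C : Set (ℕ × ℕ)}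
    (hC : (Prod.fst '' C).Finite) :
    {j | (C ∩ E j).Infinite}.Finite := by
  have hB : Prod.fst ⁻¹' (Prod.fst '' C) ∈ N2Ideal := by
    refine hC.subset fun i hi => ?_
    by_contra hiC
    exact hi (by simp [hiC])
  exact (hE _ hB).subset fun j hj =>
    hj.mono (inter_subset_inter_left _ (subset_preimage_image _ _))

lemma exists_finite_inter {D E : ℕ → Set (ℕ × ℕ)}
    (hD : ∀ B ∈ N2Ideal, {i | (B ∩ D i).Infinite}.Finite)
    (hE : ∀ B ∈ N2Ideal, {j | (B ∩ E j).Infinite}.Finite) :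
    ∃ i j, (D i ∩ E j).Finite := by
  obtain ⟨i, hi⟩ := (finite_setOf_infinite_image_fst hD).infinite_compl.nonempty
  obtain ⟨j, hj⟩ :=
    (finite_setOf_infinite_inter_of_finite_image_fst hE (not_infinite.1 hi)).infinite_compl.nonempty
  exact ⟨i, j, not_infinite.1 hj⟩

/-- For bijections π₀, π₁ : ω → ω×ω whose preimages of any two columns intersect
in an infinite set, the intersection of the pullback filters G₀ ∩ G₁ contains no
isomorphic copy of N₂. -/
theorem stmt_18 (π0 π1 : ℕ ≃ ℕ × ℕ)
    (hπ : ∀ i j : ℕ, {m : ℕ | (π0 m).1 = i ∧ (π1 m).1 = j}.Infinite)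
    (G0 G1 : Set (Set ℕ))
    (hG0 : G0 = {M : Set ℕ | π0 '' M ∈ N2})
    (hG1 : G1 = {M : Set ℕ | π1 '' M ∈ N2}) :
    ¬ ∃ σ : ℕ × ℕ → ℕ, Function.Bijective σ ∧
      ∀ A ∈ N2, σ '' A ∈ G0 ∧ σ '' A ∈ G1 := by
  subst hG0 hG1
  rintro ⟨σ, hσ, H⟩
  have h0 := finite_setOf_infinite_inter_preimage_fst (π0.bijective.comp hσ)
    fun A hA => by rw [image_comp]; exact (H A hA).1
  have h1 := finite_setOf_infinite_inter_preimage_fst (π1.bijective.comp hσ)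
    fun A hA => by rw [image_comp]; exact (H A hA).2
  obtain ⟨i, j, hij⟩ := exists_finite_inter h0 h1
  apply hπ i j
  rw [← hσ.2.image_preimage {m | (π0 m).1 = i ∧ (π1 m).1 = j}]
  exact hij.image σ
end
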